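/- arXiv:1703.09791 — 2 statements merged into one kernel-verified Lean document; each statement's English description precedes it below -/
import Mathlib

section
/- Let g₁ and g₀ be Lie algebras over ℝ, let s, t : g₁ → g₀ and e : g₀ → g₁ be Lie algebra morphisms with s ∘ e = id and t ∘ e = id. Let K := { (x, y) ∈ g₁ × g₁ : t(x) = s(y) }, which is a Lie subalgebra of g₁ × g₁, and suppose m : K → g₁ is a Lie algebra morphism satisfying the unit laws m(x, e(t(x))) = x and m(e(s(y)), y) = y for all x, y ∈ g₁. Then: (a) m(x, y) = x + y − e(s(y)) for every (x, y) ∈ K; and (b) ⁅u, v⁆ = 0 for all u, v ∈ g₁ with t(u) = 0 and s(v) = 0. -/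
/-- Let `g₁`, `g₀` be Lie algebras over `ℝ` with Lie algebra morphisms
`s, t : g₁ → g₀`, `e : g₀ → g₁` satisfying `s ∘ e = id` and `t ∘ e = id`.  Let
`K = { (x, y) : t x = s y } ⊆ g₁ × g₁` (a Lie subalgebra for the componentwise bracket) and
let `m` be a composition defined on `K` which is linear, preserves the (componentwise)
bracket of composable pairs, and satisfies the unit laws `m (x, e (t x)) = x` and
`m (e (s y), y) = y`.  Then:
(a) `m (x, y) = x + y − e (s y)` for every composable pair `(x, y)`; and
(b) `⁅u, v⁆ = 0` whenever `t u = 0` and `s v = 0`. -/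
theorem lie2Algebra_composition_formula
    {g₁ g₀ : Type*} [LieRing g₁] [LieAlgebra ℝ g₁] [LieRing g₀] [LieAlgebra ℝ g₀]
    (s t : g₁ →ₗ⁅ℝ⁆ g₀) (e : g₀ →ₗ⁅ℝ⁆ g₁)
    (hse : ∀ X : g₀, s (e X) = X) (hte : ∀ X : g₀, t (e X) = X)
    (m : g₁ → g₁ → g₁)
    (madd : ∀ x y x' y' : g₁, t x = s y → t x' = s y' →
      m (x + x') (y + y') = m x y + m x' y')
    (msmul : ∀ (c : ℝ) (x y : g₁), t x = s y → m (c • x) (c • y) = c • m x y)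
    (mbracket : ∀ x y x' y' : g₁, t x = s y → t x' = s y' →
      m ⁅x, x'⁆ ⁅y, y'⁆ = ⁅m x y, m x' y'⁆)
    (munitR : ∀ x : g₁, m x (e (t x)) = x)
    (munitL : ∀ y : g₁, m (e (s y)) y = y) :
    (∀ x y : g₁, t x = s y → m x y = x + y - e (s y)) ∧
    (∀ u v : g₁, t u = 0 → s v = 0 → ⁅u, v⁆ = 0) := by
  have e0 : e 0 = 0 := e.toLinearMap.map_zero
  have hm0 : ∀ z : g₁, t z = 0 → m z 0 = z := by
    intro z hz
    have := munitR z
    rwa [hz, e0] at this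
  have hm0' : ∀ z : g₁, s z = 0 → m 0 z = z := by
    intro z hz
    have := munitL z
    rwa [hz, e0] at this
  constructor
  · intro x y hxy
    have h1 : t (x - e (t x)) = s 0 := by simp [hte]
    have h2 : t (e (t x)) = s y := by rw [hte, hxy]
    have key := madd (x - e (t x)) 0 (e (t x)) y h1 h2
    simp only [sub_add_cancel, zero_add] at key
    rw [key, hm0 _ (by simp [hte]), hxy]
    have : m (e (s y)) y = y := munitL y
    rw [this]
    abel
  · intro u v hu hv
    have h1 : t u = s (0 : g₁) := by simp [hu]
    have h2 : t (0 : g₁) = s v := by simp [hv]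
    have := mbracket u 0 0 v h1 h2
    rw [hm0 u hu, hm0' v hv, lie_zero, zero_lie] at this
    have hm00 : m 0 0 = 0 := by simpa [hu] using hm0 0 (by simp)
    rw [hm00] at this
    exact this.symm
end

section
/- Let (f₁, f₂) : (g, h, ∂, φ) → (g', h', ∂', φ') be a morphism of crossed modules of Lie algebras over ℝ. Then the following are equivalent: (i) the induced linear maps Ker(∂) → Ker(∂') (restriction of f₁) and h / Im(∂) → h' / Im(∂') (induced by f₂) are both bijective; (ii) both of the following hold: (a) for all X, X' ∈ h, the map f₁ restricts to a bijection from { u ∈ g : ∂(u) = X' − X } onto { u' ∈ g' : ∂'(u') = f₂(X') − f₂(X) }, and (b) for every Y ∈ h' there exists X ∈ h such that Y − f₂(X) lies in the image of ∂'. -/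
/-!
The fibre of `∂` over `Z` is a coset of `Ker ∂`, and `f₁` maps it into the fibre of `∂'` over
`f₂ Z`, compatibly with the translation actions of `Ker ∂` and `Ker ∂'`. Hence `f₁` is bijective
between all nonempty fibres as soon as it is bijective between the kernels. Injectivity of
`h ⧸ Im ∂ → h' ⧸ Im ∂'` says exactly that the fibre over `Z` is nonempty whenever the one over
`f₂ Z` is.
-/

section

variable {G H G' H' : Type*} [AddGroup G] [AddGroup H] [AddGroup G'] [AddGroup H']

theorem eq_of_map_eq_of_injOn_ker (d : G →+ H) (f₁ : G →+ G')
    (hker : ∀ u v : G, d u = 0 → d v = 0 → f₁ u = f₁ v → u = v)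
    {u v : G} (hd : d u = d v) (hf : f₁ u = f₁ v) : u = v := by
  have hd₀ : d (u - v) = 0 := by rw [map_sub, hd, sub_self]
  have hf₀ : f₁ (u - v) = f₁ 0 := by rw [map_sub, hf, sub_self, map_zero]
  exact sub_eq_zero.mp (hker _ _ hd₀ (map_zero d) hf₀)

theorem exists_mem_fiber_map_eq_of_surjOn_ker (d : G →+ H) (d' : G' →+ H')
    (f₁ : G →+ G') (f₂ : H →+ H') (hcomm : ∀ u : G, f₂ (d u) = d' (f₁ u))
    (hker : ∀ u' : G', d' u' = 0 → ∃ u : G, d u = 0 ∧ f₁ u = u')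
    {Z : H} (hZ : ∃ u : G, d u = Z) {u' : G'} (hu' : d' u' = f₂ Z) :
    ∃ u : G, d u = Z ∧ f₁ u = u' := by
  obtain ⟨u₀, rfl⟩ := hZ
  have hdiff : d' (-f₁ u₀ + u') = 0 := by
    rw [map_add, map_neg, hu', hcomm, neg_add_cancel]
  obtain ⟨w, hw, hfw⟩ := hker _ hdiff
  exact ⟨u₀ + w, by rw [map_add, hw, add_zero], by rw [map_add, hfw, add_neg_cancel_left]⟩

end

theorem crossedModule_quasiIso_iff_equivalence_general
    {g h g' h' : Type*}
    [LieRing g] [LieAlgebra ℝ g] [LieRing h] [LieAlgebra ℝ h]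
    [LieRing g'] [LieAlgebra ℝ g'] [LieRing h'] [LieAlgebra ℝ h']
    (d : g →ₗ⁅ℝ⁆ h)
    (d' : g' →ₗ⁅ℝ⁆ h')
    (f₁ : g →ₗ⁅ℝ⁆ g') (f₂ : h →ₗ⁅ℝ⁆ h')
    (hcomm : ∀ u : g, f₂ (d u) = d' (f₁ u)) :
    -- (i): quasi-isomorphism
    (((∀ u v : g, d u = 0 → d v = 0 → f₁ u = f₁ v → u = v) ∧
      (∀ u' : g', d' u' = 0 → ∃ u : g, d u = 0 ∧ f₁ u = u')) ∧
     ((∀ X : h, (∃ u' : g', d' u' = f₂ X) → ∃ u : g, d u = X) ∧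
      (∀ Y : h', ∃ (X : h) (u' : g'), d' u' = Y - f₂ X)))
    ↔
    -- (ii): fully faithful and essentially surjective
    ((∀ X X' : h,
        (∀ u v : g, d u = X' - X → d v = X' - X → f₁ u = f₁ v → u = v) ∧
        (∀ u' : g', d' u' = f₂ X' - f₂ X → ∃ u : g, d u = X' - X ∧ f₁ u = u')) ∧
     (∀ Y : h', ∃ (X : h) (u' : g'), d' u' = Y - f₂ X)) := by
  constructor
  · rintro ⟨⟨hinj, hsurj⟩, hmid, hess⟩
    refine ⟨fun X X' => ⟨fun u v hu hv => ?_, fun u' hu' => ?_⟩, hess⟩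
    · exact eq_of_map_eq_of_injOn_ker (d : g →+ h) (f₁ : g →+ g') hinj (hu.trans hv.symm)
    · rw [← map_sub] at hu'
      exact exists_mem_fiber_map_eq_of_surjOn_ker (d : g →+ h) (d' : g' →+ h') (f₁ : g →+ g')
        (f₂ : h →+ h') hcomm hsurj (hmid _ ⟨u', hu'⟩) hu'
  · rintro ⟨hfib, hess⟩
    refine ⟨⟨fun u v hu hv => (hfib 0 0).1 u v (by simpa) (by simpa), fun u' hu' => ?_⟩,
      fun X ⟨u', hu'⟩ => ?_, hess⟩
    · simpa using (hfib 0 0).2 u' (by simpa)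
    · obtain ⟨u, hu, -⟩ := (hfib 0 X).2 u' (by simpa)
      exact ⟨u, by simpa using hu⟩

/-- For a morphism `(f₁, f₂)` of crossed modules of Lie algebras over `ℝ`, the
following are equivalent:
(i) the induced maps `Ker ∂ → Ker ∂'` (restriction of `f₁`) and
    `h ⧸ Im ∂ → h' ⧸ Im ∂'` (induced by `f₂`) are both bijective;
(ii) (a) for all `X, X' ∈ h`, `f₁` restricts to a bijection from
        `{ u : ∂ u = X' − X }` onto `{ u' : ∂' u' = f₂ X' − f₂ X }`, and
     (b) for every `Y ∈ h'` there exists `X ∈ h` with `Y − f₂ X ∈ Im ∂'`. -/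
theorem crossedModule_quasiIso_iff_equivalence
    {g h g' h' : Type*}
    [LieRing g] [LieAlgebra ℝ g] [LieRing h] [LieAlgebra ℝ h]
    [LieRing g'] [LieAlgebra ℝ g'] [LieRing h'] [LieAlgebra ℝ h']
    (d : g →ₗ⁅ℝ⁆ h) (φ : h →ₗ⁅ℝ⁆ LieDerivation ℝ g g)
    (peiffer : ∀ u v : g, φ (d u) v = ⁅u, v⁆)
    (equivar : ∀ (X : h) (u : g), d (φ X u) = ⁅X, d u⁆)
    (d' : g' →ₗ⁅ℝ⁆ h') (φ' : h' →ₗ⁅ℝ⁆ LieDerivation ℝ g' g')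
    (peiffer' : ∀ u v : g', φ' (d' u) v = ⁅u, v⁆)
    (equivar' : ∀ (X : h') (u : g'), d' (φ' X u) = ⁅X, d' u⁆)
    (f₁ : g →ₗ⁅ℝ⁆ g') (f₂ : h →ₗ⁅ℝ⁆ h')
    (hcomm : ∀ u : g, f₂ (d u) = d' (f₁ u))
    (hequiv : ∀ (X : h) (u : g), f₁ (φ X u) = φ' (f₂ X) (f₁ u)) :
    -- (i): quasi-isomorphism
    (((∀ u v : g, d u = 0 → d v = 0 → f₁ u = f₁ v → u = v) ∧
      (∀ u' : g', d' u' = 0 → ∃ u : g, d u = 0 ∧ f₁ u = u')) ∧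
     ((∀ X : h, (∃ u' : g', d' u' = f₂ X) → ∃ u : g, d u = X) ∧
      (∀ Y : h', ∃ (X : h) (u' : g'), d' u' = Y - f₂ X)))
    ↔
    -- (ii): fully faithful and essentially surjective
    ((∀ X X' : h,
        (∀ u v : g, d u = X' - X → d v = X' - X → f₁ u = f₁ v → u = v) ∧
        (∀ u' : g', d' u' = f₂ X' - f₂ X → ∃ u : g, d u = X' - X ∧ f₁ u = u')) ∧
     (∀ Y : h', ∃ (X : h) (u' : g'), d' u' = Y - f₂ X)) :=
  crossedModule_quasiIso_iff_equivalence_general d d' f₁ f₂ hcomm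
end
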